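/- If B1 is the largest block (in descending total order), can be packed into a regular aligned container C* with w1 = w* (block width equals container width), and some solution packs B1 inside C* at position (x1*, y1*), then there is a solution packing B1 at position Loc(C*) (the lower-left corner of C*). The proof shows any block overlapping the horizontal strip of height h1 at the bottom of C* must be entirely inside it, so strips of equal size can be swapped. -/

import Mathlib

/-!
Let `y₀ > y*` be the vertical position of `B1` (block `0`) inside `C*` and let `H` be the largest
power of `q2` dividing `y₀ - y*`. Then `H ∣ y₀`, and the strips `[y₀ - H, y₀)` and `[y₀, y₀ + H)`
across the full width of `C*` lie in `C*`. Every block meeting them lies in `C*` and has height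
dividing `H`: a taller block, being `H`-aligned and disjoint from `B1` (which spans the width of
`C*`), would have to end at `y₀`, so its height would divide `y₀ - y*`, contradicting the maximality
of `H`. Hence each block meeting the strips lies inside one of them, and exchanging the two strips
gives a solution with `B1` lowered by `H`. Iterating brings `B1` down to `y*`.
-/

/-- The half-open rectangular region `[x, x+w) × [y, y+h) ⊆ ℤ²`. -/
def Reg (x y w h : ℤ) : Set (ℤ × ℤ) :=
  Set.Ico x (x + w) ×ˢ Set.Ico y (y + h)

/-- Region of a container given as a tuple `(x, y, w, h)`. -/
def RegT (c : ℤ × ℤ × ℤ × ℤ) : Set (ℤ × ℤ) :=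
  Reg c.1 c.2.1 c.2.2.1 c.2.2.2

/-- A solution to the constrained packing problem. -/
def IsSolution (m : ℕ) (wB hB : Fin m → ℤ) (𝒞 : Set (ℤ × ℤ × ℤ × ℤ))
    (x y : Fin m → ℤ) : Prop :=
  (∀ i, wB i ∣ x i ∧ hB i ∣ y i) ∧
  (∀ i j, i ≠ j →
    Reg (x i) (y i) (wB i) (hB i) ∩ Reg (x j) (y j) (wB j) (hB j) = ∅) ∧
  (∀ i, ∃ c ∈ 𝒞, Reg (x i) (y i) (wB i) (hB i) ⊆ RegT c)

/-- The strict total order on sizes: compare `max(w,h)`, then `w`, then `h`. -/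
def sizeLT (s t : ℤ × ℤ) : Prop :=
  max s.1 s.2 < max t.1 t.2 ∨
  (max s.1 s.2 = max t.1 t.2 ∧ s.1 < t.1) ∨
  (max s.1 s.2 = max t.1 t.2 ∧ s.1 = t.1 ∧ s.2 < t.2)

/-- The corresponding total (non-strict) order on sizes. -/
def sizeLE (s t : ℤ × ℤ) : Prop := s = t ∨ sizeLT s t

open Set Function

lemma Reg_subset_Reg_iff {x y w h x' y' w' h' : ℤ} (hw : 0 < w) (hh : 0 < h) :
    Reg x y w h ⊆ Reg x' y' w' h' ↔ x' ≤ x ∧ x + w ≤ x' + w' ∧ y' ≤ y ∧ y + h ≤ y' + h' := by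
  have hne : (Reg x y w h).Nonempty := (nonempty_Ico.2 (by omega)).prod (nonempty_Ico.2 (by omega))
  rw [Reg, Reg, prod_subset_prod_iff' hne, Ico_subset_Ico_iff (by omega),
    Ico_subset_Ico_iff (by omega), and_assoc]

lemma add_le_or_le_of_dvd {h y c : ℤ} (hy : h ∣ y) (hc : h ∣ c) :
    y + h ≤ c ∨ c ≤ y := by
  rcases le_or_gt (c - y) 0 with hle | hlt
  · omega
  · have := Int.le_of_dvd hlt (dvd_sub hc hy)
    omega

lemma Ico_subset_or_subset_of_dvd {h y a H : ℤ} (hy : h ∣ y) (ha : h ∣ a)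
    (hH : h ∣ H) (hlo : a < y + h) (hhi : y < a + 2 * H) :
    (a ≤ y ∧ y + h ≤ a + H) ∨ (a + H ≤ y ∧ y + h ≤ a + 2 * H) := by
  have h₁ := add_le_or_le_of_dvd hy ha
  have h₂ := add_le_or_le_of_dvd hy (dvd_add ha hH)
  have h₃ := add_le_or_le_of_dvd hy (dvd_add ha (dvd_mul_of_dvd_right hH 2))
  omega

lemma add_eq_of_dvd_of_disjoint {H y h y₀ h₀ : ℤ} (hy : H ∣ y) (hh : H ∣ h)
    (hy₀ : H ∣ y₀) (hh₀ : 0 < h₀) (hdisj : y + h ≤ y₀ ∨ y₀ + h₀ ≤ y)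
    (hlo : y₀ - H < y + h) (hhi : y < y₀ + H) : y + h = y₀ := by
  have h₁ := add_le_or_le_of_dvd (dvd_sub hy₀ dvd_rfl) (dvd_add hy hh)
  have h₂ := add_le_or_le_of_dvd hy (dvd_add hy₀ dvd_rfl)
  omega

lemma exists_pow_dvd_not_pow_succ_dvd {q d : ℤ} (hq : 1 < q) (hd : d ≠ 0) :
    ∃ v : ℕ, q ^ v ∣ d ∧ ¬ q ^ (v + 1) ∣ d :=
  ⟨multiplicity q d, pow_multiplicity_dvd q d,
    (Int.finiteMultiplicity_iff.2 ⟨by omega, hd⟩).not_pow_dvd_of_multiplicity_lt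
      (Nat.lt_succ_self _)⟩

lemma pow_dvd_pow_of_pow_le {q : ℤ} (hq : 1 < q) {a b : ℕ} (h : q ^ a ≤ q ^ b) :
    q ^ a ∣ q ^ b :=
  pow_dvd_pow q ((pow_le_pow_iff_right₀ hq).1 h)

lemma pow_dvd_pow_of_dvd_of_not_pow_succ_dvd {q d : ℤ} {b v : ℕ} (hb : q ^ b ∣ d)
    (hv : ¬ q ^ (v + 1) ∣ d) : q ^ b ∣ q ^ v :=
  pow_dvd_pow q (not_lt.1 fun hvb => hv ((pow_dvd_pow q hvb).trans hb))

lemma image_Reg_of_eqOn {φ : ℤ × ℤ → ℤ × ℤ} {x y w h t : ℤ}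
    (hφ : ∀ p ∈ Reg x y w h, φ p = (p.1, p.2 + t)) :
    φ '' Reg x y w h = Reg x (y + t) w h := by
  rw [image_congr hφ]
  ext ⟨p₁, p₂⟩
  simp only [Reg, mem_image, mem_prod, mem_Ico, Prod.exists, Prod.mk.injEq]
  constructor
  · rintro ⟨a, b, ⟨⟨h₁, h₂⟩, h₃, h₄⟩, rfl, rfl⟩
    omega
  · rintro ⟨⟨h₁, h₂⟩, h₃, h₄⟩
    exact ⟨p₁, p₂ - t, by omega, rfl, by omega⟩

open Classical in
noncomputable def stripSwap (c : Set ℤ) (a H : ℤ) (p : ℤ × ℤ) : ℤ × ℤ :=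
  if p ∈ c ×ˢ Ico a (a + H) then (p.1, p.2 + H)
  else if p ∈ c ×ˢ Ico (a + H) (a + 2 * H) then (p.1, p.2 + -H)
  else p

section stripSwap

variable {c : Set ℤ} {a H : ℤ} {p : ℤ × ℤ}

lemma stripSwap_of_mem_lower (hp : p ∈ c ×ˢ Ico a (a + H)) :
    stripSwap c a H p = (p.1, p.2 + H) :=
  if_pos hp

lemma stripSwap_of_mem_upper (hp : p ∈ c ×ˢ Ico (a + H) (a + 2 * H)) :
    stripSwap c a H p = (p.1, p.2 + -H) := by
  have : p ∉ c ×ˢ Ico a (a + H) := fun h => by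
    have := h.2.2; have := hp.2.1; omega
  rw [stripSwap, if_neg this, if_pos hp]

lemma stripSwap_of_notMem (hp : p ∉ c ×ˢ Ico a (a + 2 * H)) : stripSwap c a H p = p := by
  have h₁ : p ∉ c ×ˢ Ico a (a + H) := fun ⟨hc, hlo, hhi⟩ => hp ⟨hc, hlo, by omega⟩
  have h₂ : p ∉ c ×ˢ Ico (a + H) (a + 2 * H) := fun ⟨hc, hlo, hhi⟩ => hp ⟨hc, by omega, hhi⟩
  rw [stripSwap, if_neg h₁, if_neg h₂]

lemma stripSwap_involutive : Involutive (stripSwap c a H) := by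
  intro p
  by_cases h₁ : p ∈ c ×ˢ Ico a (a + H)
  · obtain ⟨hc, hlo, hhi⟩ := h₁
    rw [stripSwap_of_mem_lower ⟨hc, hlo, hhi⟩,
      stripSwap_of_mem_upper (p := (p.1, p.2 + H))
        ⟨hc, by dsimp only; omega, by dsimp only; omega⟩,
      add_neg_cancel_right]
  by_cases h₂ : p ∈ c ×ˢ Ico (a + H) (a + 2 * H)
  · obtain ⟨hc, hlo, hhi⟩ := h₂
    rw [stripSwap_of_mem_upper ⟨hc, hlo, hhi⟩,
      stripSwap_of_mem_lower (p := (p.1, p.2 + -H))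
        ⟨hc, by dsimp only; omega, by dsimp only; omega⟩,
      neg_add_cancel_right]
  have h : p ∉ c ×ˢ Ico a (a + 2 * H) := fun ⟨hc, hlo, hhi⟩ => by
    by_cases hp : p.2 < a + H
    · exact h₁ ⟨hc, hlo, hp⟩
    · exact h₂ ⟨hc, not_lt.1 hp, hhi⟩
  rw [stripSwap_of_notMem h, stripSwap_of_notMem h]

lemma stripSwap_mem (hp : p ∈ c ×ˢ Ico a (a + 2 * H)) :
    stripSwap c a H p ∈ c ×ˢ Ico a (a + 2 * H) := by
  obtain ⟨hc, hlo, hhi⟩ := hp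
  by_cases h : p.2 < a + H
  · rw [stripSwap_of_mem_lower ⟨hc, hlo, h⟩]
    exact ⟨hc, by simp only [mem_Ico]; omega⟩
  · rw [stripSwap_of_mem_upper ⟨hc, not_lt.1 h, hhi⟩]
    exact ⟨hc, by simp only [mem_Ico]; omega⟩

lemma mapsTo_stripSwap {T : Set (ℤ × ℤ)}
    (hT : c ×ˢ Ico a (a + 2 * H) ⊆ T ∨ Disjoint (c ×ˢ Ico a (a + 2 * H)) T) :
    MapsTo (stripSwap c a H) T T := by
  intro p hp
  by_cases hS : p ∈ c ×ˢ Ico a (a + 2 * H)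
  · rcases hT with hT | hT
    · exact hT (stripSwap_mem hS)
    · exact absurd hp (hT.notMem_of_mem_left hS)
  · rwa [stripSwap_of_notMem hS]

lemma exists_shift_stripSwap {x y w h : ℤ} (hy : h ∣ y)
    (hmeet : (Reg x y w h ∩ c ×ˢ Ico a (a + 2 * H)).Nonempty →
      Ico x (x + w) ⊆ c ∧ h ∣ a ∧ h ∣ H) :
    ∃ t, h ∣ t ∧ ∀ p ∈ Reg x y w h, stripSwap c a H p = (p.1, p.2 + t) := by
  by_cases hne : (Reg x y w h ∩ c ×ˢ Ico a (a + 2 * H)).Nonempty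
  · obtain ⟨hc, ha, hH⟩ := hmeet hne
    obtain ⟨q, ⟨-, hq₁, hq₂⟩, -, hq₃, hq₄⟩ := hne
    rcases Ico_subset_or_subset_of_dvd hy ha hH (by omega) (by omega) with hl | hu
    · refine ⟨H, hH, fun p ⟨hp₁, hp₂, hp₃⟩ => stripSwap_of_mem_lower ⟨hc hp₁, ?_⟩⟩
      simp only [mem_Ico]; omega
    · refine ⟨-H, hH.neg_right, fun p ⟨hp₁, hp₂, hp₃⟩ => stripSwap_of_mem_upper ⟨hc hp₁, ?_⟩⟩
      simp only [mem_Ico]; omega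
  · exact ⟨0, dvd_zero h, fun p hp =>
      by rw [stripSwap_of_notMem fun hS => hne ⟨p, hp, hS⟩, add_zero]⟩

end stripSwap

section IsSolution

variable {m : ℕ} {wB hB : Fin m → ℤ} {𝒞 : Set (ℤ × ℤ × ℤ × ℤ)} {x y : Fin m → ℤ}

lemma IsSolution.of_shift (hsol : IsSolution m wB hB 𝒞 x y) {φ : ℤ × ℤ → ℤ × ℤ}
    (hφ : Injective φ) (h𝒞 : ∀ c ∈ 𝒞, MapsTo φ (RegT c) (RegT c)) {t : Fin m → ℤ}
    (ht : ∀ i, hB i ∣ t i)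
    (hφt : ∀ i, ∀ p ∈ Reg (x i) (y i) (wB i) (hB i), φ p = (p.1, p.2 + t i)) :
    IsSolution m wB hB 𝒞 x (y + t) := by
  have himg i : φ '' Reg (x i) (y i) (wB i) (hB i) = Reg (x i) ((y + t) i) (wB i) (hB i) :=
    image_Reg_of_eqOn (hφt i)
  refine ⟨fun i => ⟨(hsol.1 i).1, dvd_add (hsol.1 i).2 (ht i)⟩, fun i j hij => ?_, fun i => ?_⟩
  · rw [← himg, ← himg, ← image_inter hφ, hsol.2.1 i j hij, image_empty]
  · obtain ⟨c, hc, hsub⟩ := hsol.2.2 i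
    exact ⟨c, hc, himg i ▸ (image_mono hsub).trans (h𝒞 c hc).image_subset⟩

lemma IsSolution.subset_of_nonempty_inter (hsol : IsSolution m wB hB 𝒞 x y)
    (h𝒞disj : ∀ c ∈ 𝒞, ∀ c' ∈ 𝒞, c ≠ c' → RegT c ∩ RegT c' = ∅) {C : ℤ × ℤ × ℤ × ℤ}
    (hC : C ∈ 𝒞) {i : Fin m} (hi : (Reg (x i) (y i) (wB i) (hB i) ∩ RegT C).Nonempty) :
    Reg (x i) (y i) (wB i) (hB i) ⊆ RegT C := by
  obtain ⟨c, hc, hsub⟩ := hsol.2.2 i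
  obtain rfl : c = C := by
    by_contra hne
    obtain ⟨p, hp, hpC⟩ := hi
    exact (eq_empty_iff_forall_notMem.1 (h𝒞disj c hc C hC hne) p) ⟨hsub hp, hpC⟩
  exact hsub

lemma IsSolution.rows_disjoint (hsol : IsSolution m wB hB 𝒞 x y) {i j : Fin m} (hij : i ≠ j)
    (hx : x j ≤ x i) (hx' : x i + wB i ≤ x j + wB j) (hw : 0 < wB i)
    (hhi : 0 < hB i) (hhj : 0 < hB j) :
    y i + hB i ≤ y j ∨ y j + hB j ≤ y i := by
  by_contra! h
  have hp : (x i, max (y i) (y j)) ∈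
      Reg (x i) (y i) (wB i) (hB i) ∩ Reg (x j) (y j) (wB j) (hB j) :=
    ⟨⟨⟨le_rfl, by omega⟩, le_max_left _ _, max_lt (by omega) h.1⟩,
      ⟨hx, by omega⟩, le_max_right _ _, max_lt h.2 (by omega)⟩
  rw [hsol.2.1 i j hij] at hp
  exact hp

lemma IsSolution.exists_stripSwap (hsol : IsSolution m wB hB 𝒞 x y)
    (h𝒞disj : ∀ c ∈ 𝒞, ∀ c' ∈ 𝒞, c ≠ c' → RegT c ∩ RegT c' = ∅) {C : ℤ × ℤ × ℤ × ℤ}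
    (hC : C ∈ 𝒞) {c : Set ℤ} {a H : ℤ} (hSC : c ×ˢ Ico a (a + 2 * H) ⊆ RegT C)
    (hblocks : ∀ i, (Reg (x i) (y i) (wB i) (hB i) ∩ c ×ˢ Ico a (a + 2 * H)).Nonempty →
      Ico (x i) (x i + wB i) ⊆ c ∧ hB i ∣ a ∧ hB i ∣ H) :
    ∃ t : Fin m → ℤ, IsSolution m wB hB 𝒞 x (y + t) ∧
      ∀ i, ∀ p ∈ Reg (x i) (y i) (wB i) (hB i), stripSwap c a H p = (p.1, p.2 + t i) := by
  choose t ht hφt using fun i => exists_shift_stripSwap (hsol.1 i).2 (hblocks i)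
  refine ⟨t, hsol.of_shift stripSwap_involutive.injective (fun c' hc' => mapsTo_stripSwap ?_)
    ht hφt, hφt⟩
  by_cases hc'C : c' = C
  · exact .inl (hc'C ▸ hSC)
  · exact .inr ((disjoint_iff_inter_eq_empty.2 (h𝒞disj _ hC c' hc' (Ne.symm hc'C))).mono_left hSC)

end IsSolution

lemma exists_maximal_pow_strip {q ys y₀ h₀ : ℤ} {bs : ℕ} (hq : 1 < q) (hys : q ^ bs ∣ ys)
    (hh₀ : 0 < h₀) (hlt : ys < y₀) (htop : y₀ + h₀ ≤ ys + q ^ bs) :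
    ∃ v : ℕ, ¬ q ^ (v + 1) ∣ y₀ - ys ∧ q ^ v ∣ y₀ ∧ ys ≤ y₀ - q ^ v ∧ y₀ + q ^ v ≤ ys + q ^ bs := by
  obtain ⟨v, hvd, hv⟩ := exists_pow_dvd_not_pow_succ_dvd hq (sub_ne_zero.2 hlt.ne')
  have hle : q ^ v ≤ y₀ - ys := Int.le_of_dvd (by omega) hvd
  have hvs : q ^ v ∣ q ^ bs := pow_dvd_pow_of_pow_le hq (by omega)
  have hvy₀ : q ^ v ∣ y₀ := by simpa using dvd_add (hvs.trans hys) hvd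
  have := add_le_or_le_of_dvd hvy₀ (dvd_add (hvs.trans hys) hvs)
  exact ⟨v, hv, hvy₀, by omega, by omega⟩

theorem IsSolution.aligned_of_meets_strip {q : ℤ} (hq : 1 < q) {m : ℕ}
    {wB hB : Fin (m + 1) → ℤ} {𝒞 : Set (ℤ × ℤ × ℤ × ℤ)} {x y : Fin (m + 1) → ℤ}
    (hsol : IsSolution (m + 1) wB hB 𝒞 x y) (hheights : ∀ i, ∃ b : ℕ, hB i = q ^ b)
    (h𝒞disj : ∀ c ∈ 𝒞, ∀ c' ∈ 𝒞, c ≠ c' → RegT c ∩ RegT c' = ∅)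
    {xs ys ws : ℤ} {bs : ℕ} (hC : (xs, ys, ws, q ^ bs) ∈ 𝒞) (hys : q ^ bs ∣ ys)
    (hx₀ : x 0 = xs) (hw₀ : wB 0 = ws) {v : ℕ} (hv : ¬ q ^ (v + 1) ∣ y 0 - ys)
    (hvy₀ : q ^ v ∣ y 0) (hlo : ys ≤ y 0 - q ^ v) (hhi : y 0 + q ^ v ≤ ys + q ^ bs) {i : Fin (m + 1)}
    (hi : (Reg (x i) (y i) (wB i) (hB i) ∩
      Ico xs (xs + ws) ×ˢ Ico (y 0 - q ^ v) (y 0 - q ^ v + 2 * q ^ v)).Nonempty) :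
    Ico (x i) (x i + wB i) ⊆ Ico xs (xs + ws) ∧ hB i ∣ y 0 - q ^ v ∧ hB i ∣ q ^ v := by
  obtain ⟨b₀, hb₀⟩ := hheights 0
  have hh₀ : 0 < hB 0 := by rw [hb₀]; exact pow_pos (by omega) b₀
  obtain ⟨b, hb⟩ := hheights i
  obtain ⟨p, hp, hpS⟩ := hi
  have hSC : Ico xs (xs + ws) ×ˢ Ico (y 0 - q ^ v) (y 0 - q ^ v + 2 * q ^ v) ⊆
      Reg xs ys ws (q ^ bs) :=
    prod_mono subset_rfl (Ico_subset_Ico (by omega) (by omega))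
  have hsub : Reg (x i) (y i) (wB i) (hB i) ⊆ Reg xs ys ws (q ^ bs) :=
    hsol.subset_of_nonempty_inter h𝒞disj hC ⟨p, hp, hSC hpS⟩
  obtain ⟨⟨hp₁, hp₂⟩, hp₃, hp₄⟩ := hp
  obtain ⟨-, hp₅, hp₆⟩ := hpS
  obtain ⟨hx₁, hx₂, hy₁, hy₂⟩ := (Reg_subset_Reg_iff (by omega) (by omega)).1 hsub
  have hdvd_ys : hB i ∣ ys := by
    rw [hb] at hy₂ ⊢
    exact (pow_dvd_pow_of_pow_le hq (by omega)).trans hys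
  have hdvd_y₀ : hB i ∣ y 0 := by
    rcases eq_or_ne i 0 with rfl | hi0
    · exact (hsol.1 0).2
    rcases le_or_gt b v with hbv | hvb
    · exact (hb ▸ pow_dvd_pow q hbv).trans hvy₀
    -- a block taller than `q ^ v` can only meet the strip by ending exactly where block `0` starts
    have hvi : q ^ v ∣ hB i := hb ▸ pow_dvd_pow q hvb.le
    have hrows := hsol.rows_disjoint hi0 (by omega) (by omega) (by omega) (by omega) hh₀
    rw [← add_eq_of_dvd_of_disjoint (hvi.trans (hsol.1 i).2) hvi hvy₀ hh₀ hrows (by omega)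
      (by omega)]
    exact dvd_add (hsol.1 i).2 dvd_rfl
  have hiv : hB i ∣ q ^ v := by
    rw [hb] at hdvd_y₀ hdvd_ys ⊢
    exact pow_dvd_pow_of_dvd_of_not_pow_succ_dvd (dvd_sub hdvd_y₀ hdvd_ys) hv
  exact ⟨Ico_subset_Ico hx₁ hx₂, hiv.trans (dvd_sub hvy₀ dvd_rfl), hiv⟩

theorem IsSolution.exists_lower {q : ℤ} (hq : 1 < q) {m : ℕ} {wB hB : Fin (m + 1) → ℤ}
    {𝒞 : Set (ℤ × ℤ × ℤ × ℤ)} {x y : Fin (m + 1) → ℤ} (hsol : IsSolution (m + 1) wB hB 𝒞 x y)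
    (hheights : ∀ i, ∃ b : ℕ, hB i = q ^ b)
    (h𝒞disj : ∀ c ∈ 𝒞, ∀ c' ∈ 𝒞, c ≠ c' → RegT c ∩ RegT c' = ∅)
    {xs ys ws : ℤ} {bs : ℕ} (hC : (xs, ys, ws, q ^ bs) ∈ 𝒞) (hys : q ^ bs ∣ ys)
    (hx₀ : x 0 = xs) (hw₀ : wB 0 = ws) (hws : 0 < ws) (hlt : ys < y 0)
    (htop : y 0 + hB 0 ≤ ys + q ^ bs) :
    ∃ y', IsSolution (m + 1) wB hB 𝒞 x y' ∧ ys ≤ y' 0 ∧ y' 0 < y 0 := by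
  obtain ⟨b₀, hb₀⟩ := hheights 0
  have hh₀ : 0 < hB 0 := by rw [hb₀]; exact pow_pos (by omega) b₀
  obtain ⟨v, hv, hvy₀, hlo, hhi⟩ := exists_maximal_pow_strip hq hys hh₀ hlt htop
  have hSC : Ico xs (xs + ws) ×ˢ Ico (y 0 - q ^ v) (y 0 - q ^ v + 2 * q ^ v) ⊆
      Reg xs ys ws (q ^ bs) :=
    prod_mono subset_rfl (Ico_subset_Ico (by omega) (by omega))
  obtain ⟨t, hsol', hφt⟩ := hsol.exists_stripSwap h𝒞disj hC hSC fun i =>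
    hsol.aligned_of_meets_strip hq hheights h𝒞disj hC hys hx₀ hw₀ hv hvy₀ hlo hhi
  have hv₀ : 0 < q ^ v := pow_pos (by omega) v
  have ht₀ : t 0 = -q ^ v := by
    have h₀ : (x 0, y 0) ∈
        Ico xs (xs + ws) ×ˢ Ico (y 0 - q ^ v + q ^ v) (y 0 - q ^ v + 2 * q ^ v) := by
      simp only [mem_prod, mem_Ico]; omega
    have := hφt 0 (x 0, y 0) ⟨⟨le_rfl, by omega⟩, le_rfl, by omega⟩
    rw [stripSwap_of_mem_upper h₀] at this
    simpa using this.symm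
  exact ⟨y + t, hsol', by simp only [Pi.add_apply, ht₀]; omega,
    by simp only [Pi.add_apply, ht₀]; omega⟩

theorem IsSolution.exists_at_bottom {q : ℤ} (hq : 1 < q) {m : ℕ} {wB hB : Fin (m + 1) → ℤ}
    {𝒞 : Set (ℤ × ℤ × ℤ × ℤ)} {x y : Fin (m + 1) → ℤ} (hsol : IsSolution (m + 1) wB hB 𝒞 x y)
    (hheights : ∀ i, ∃ b : ℕ, hB i = q ^ b)
    (h𝒞disj : ∀ c ∈ 𝒞, ∀ c' ∈ 𝒞, c ≠ c' → RegT c ∩ RegT c' = ∅)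
    {xs ys ws : ℤ} {bs : ℕ} (hC : (xs, ys, ws, q ^ bs) ∈ 𝒞) (hys : q ^ bs ∣ ys)
    (hx₀ : x 0 = xs) (hw₀ : wB 0 = ws) (hws : 0 < ws) (hle : ys ≤ y 0)
    (htop : y 0 + hB 0 ≤ ys + q ^ bs) :
    ∃ y', IsSolution (m + 1) wB hB 𝒞 x y' ∧ y' 0 = ys := by
  induction hn : (y 0 - ys).toNat using Nat.strong_induction_on generalizing y with
  | _ n ih =>
  rcases hle.eq_or_lt with heq | hlt
  · exact ⟨y, hsol, heq.symm⟩
  obtain ⟨y', hsol', hlo, hlt'⟩ :=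
    hsol.exists_lower hq hheights h𝒞disj hC hys hx₀ hw₀ hws hlt htop
  exact ih _ (by omega) hsol' hlo (by omega) rfl

theorem stmt13_general (q1 q2 : ℕ) (hq1 : 1 < q1) (hq2 : 1 < q2)
    (m : ℕ) (wB hB : Fin (m + 1) → ℤ)
    (hBreg : ∀ i, ∃ a b : ℕ, wB i = (q1 : ℤ) ^ a ∧ hB i = (q2 : ℤ) ^ b)
    (𝒞 : Set (ℤ × ℤ × ℤ × ℤ))
    (h𝒞reg : ∀ c ∈ 𝒞, ∃ a b : ℕ,
        c.2.2.1 = (q1 : ℤ) ^ a ∧ c.2.2.2 = (q2 : ℤ) ^ b ∧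
        c.2.2.1 ∣ c.1 ∧ c.2.2.2 ∣ c.2.1)
    (h𝒞disj : ∀ c ∈ 𝒞, ∀ c' ∈ 𝒞, c ≠ c' → RegT c ∩ RegT c' = ∅)
    (xs ys ws hs : ℤ) (hCstar : (xs, ys, ws, hs) ∈ 𝒞)
    (hww : wB 0 = ws)
    (x1s y1s : ℤ) (x y : Fin (m + 1) → ℤ)
    (hsol : IsSolution (m + 1) wB hB 𝒞 x y)
    (hpos : x 0 = x1s ∧ y 0 = y1s)
    (hin : Reg x1s y1s (wB 0) (hB 0) ⊆ RegT (xs, ys, ws, hs)) :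
    ∃ x' y' : Fin (m + 1) → ℤ,
      IsSolution (m + 1) wB hB 𝒞 x' y' ∧ x' 0 = xs ∧ y' 0 = ys := by
  obtain ⟨-, bs, -, rfl, -, hys⟩ := h𝒞reg _ hCstar
  obtain ⟨rfl, rfl⟩ := hpos
  obtain ⟨a₀, b₀, hwa, hhb⟩ := hBreg 0
  have hw₀ : 0 < wB 0 := by rw [hwa]; exact pow_pos (by omega) a₀
  have hh₀ : 0 < hB 0 := by rw [hhb]; exact pow_pos (by omega) b₀
  have hin' : Reg (x 0) (y 0) (wB 0) (hB 0) ⊆ Reg xs ys ws ((q2 : ℤ) ^ bs) := hin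
  obtain ⟨hx₁, hx₂, hy₁, hy₂⟩ := (Reg_subset_Reg_iff hw₀ hh₀).1 hin'
  obtain ⟨y', hsol', hy'⟩ := hsol.exists_at_bottom (by exact_mod_cast hq2)
    (fun i => (hBreg i).elim fun _ ⟨b, _, hb⟩ => ⟨b, hb⟩) h𝒞disj hCstar hys (by omega) hww
    (by omega) hy₁ hy₂
  exact ⟨x, y', hsol', by omega, hy'⟩

/-- if `B1` (block `0`) is the largest block in the descending total
order, `C* = [x*, x*+w*) × [y*, y*+h*)` is a regular aligned container with
`w1 = w*`, and some solution packs `B1` inside `C*` (at position `(x1*, y1*)`),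
then there is a solution packing `B1` at the lower-left corner `(x*, y*)` of
`C*`. -/
theorem stmt13 (q1 q2 : ℕ) (hq1 : 1 < q1) (hq2 : 1 < q2)
    (m : ℕ) (wB hB : Fin (m + 1) → ℤ)
    (hBreg : ∀ i, ∃ a b : ℕ, wB i = (q1 : ℤ) ^ a ∧ hB i = (q2 : ℤ) ^ b)
    (hlargest : ∀ i, sizeLE (wB i, hB i) (wB 0, hB 0))
    (𝒞 : Set (ℤ × ℤ × ℤ × ℤ))
    (h𝒞reg : ∀ c ∈ 𝒞, ∃ a b : ℕ,
        c.2.2.1 = (q1 : ℤ) ^ a ∧ c.2.2.2 = (q2 : ℤ) ^ b ∧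
        c.2.2.1 ∣ c.1 ∧ c.2.2.2 ∣ c.2.1)
    (h𝒞disj : ∀ c ∈ 𝒞, ∀ c' ∈ 𝒞, c ≠ c' → RegT c ∩ RegT c' = ∅)
    (xs ys ws hs : ℤ) (hCstar : (xs, ys, ws, hs) ∈ 𝒞)
    (hww : wB 0 = ws)
    (x1s y1s : ℤ) (x y : Fin (m + 1) → ℤ)
    (hsol : IsSolution (m + 1) wB hB 𝒞 x y)
    (hpos : x 0 = x1s ∧ y 0 = y1s)
    (hin : Reg x1s y1s (wB 0) (hB 0) ⊆ RegT (xs, ys, ws, hs)) :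
    ∃ x' y' : Fin (m + 1) → ℤ,
      IsSolution (m + 1) wB hB 𝒞 x' y' ∧ x' 0 = xs ∧ y' 0 = ys :=
  stmt13_general q1 q2 hq1 hq2 m wB hB hBreg 𝒞 h𝒞reg h𝒞disj xs ys ws hs hCstar hww x1s y1s x y hsol
    hpos hin
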